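/- Let K ⊆ ℤ_max^n be a subsemimodule with finite volume. Then for all A ∈ ℤ_max^{n×n} and B ∈ ℤ_max^{n×p}, the maximal geometrically (A,B)-invariant semimodule K* contained in K is finitely generated; moreover, defining X₁ = K and X_{r+1} = φ(X_r), there exists k ≤ vol(K)+1 with X_{k+1} = X_k and K* = X_k. -/

import Mathlib

/-- The max-plus matrix–vector product over `ℤ_max = (ℤ ∪ {−∞}, max, +)`:
`(Ax)_i = max_j (A_{ij} + x_j)`. -/
def maxMulVec {m k : ℕ} (A : Matrix (Fin m) (Fin k) (WithBot ℤ))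
    (x : Fin k → WithBot ℤ) : Fin m → WithBot ℤ :=
  fun i => Finset.univ.sup fun j => A i j + x j

/-- The max-plus matrix product: `(AB)_{ij} = max_t (A_{it} + B_{tj})`. -/
def maxMatMul {m k l : ℕ} (A : Matrix (Fin m) (Fin k) (WithBot ℤ))
    (B : Matrix (Fin k) (Fin l) (WithBot ℤ)) : Matrix (Fin m) (Fin l) (WithBot ℤ) :=
  Matrix.of fun i j => Finset.univ.sup fun t => A i t + B t j

/-- `Im A`: the subsemimodule generated by the columns of `A`, i.e. the set of all
max-plus linear combinations `Ay` of the columns of `A`. -/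
def ImM {m k : ℕ} (A : Matrix (Fin m) (Fin k) (WithBot ℤ)) : Set (Fin m → WithBot ℤ) :=
  {v | ∃ y : Fin k → WithBot ℤ, v = maxMulVec A y}

/-- A subsemimodule of `ℤ_max^m`: contains `(−∞,…,−∞)`, is closed under entrywise max,
and under addition of a scalar `λ ∈ ℤ ∪ {−∞}` to all entries. -/
def IsSubsemimodule {m : ℕ} (X : Set (Fin m → WithBot ℤ)) : Prop :=
  (fun _ => ⊥) ∈ X ∧ (∀ x ∈ X, ∀ y ∈ X, x ⊔ y ∈ X) ∧
    ∀ (c : WithBot ℤ), ∀ x ∈ X, (fun i => c + x i) ∈ X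

/-- The volume of a subset of `ℤ_max^m`: the cardinality (in `ℕ ∪ {∞}`) of the set
of its elements `x` with `max_i x_i = 0`. -/
noncomputable def vol {m : ℕ} (X : Set (Fin m → WithBot ℤ)) : ℕ∞ :=
  {x ∈ X | Finset.univ.sup x = (0 : WithBot ℤ)}.encard

/-- The subsemimodule of `ℤ_max^m` generated by a set `G`: all max-plus linear
combinations of finitely many elements of `G`. -/
def maxSpan {m : ℕ} (G : Set (Fin m → WithBot ℤ)) : Set (Fin m → WithBot ℤ) :=
  {x | ∃ (k : ℕ) (u : Fin k → Fin m → WithBot ℤ) (lam : Fin k → WithBot ℤ),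
    (∀ i, u i ∈ G) ∧ x = fun j => Finset.univ.sup fun i => lam i + u i j}

/-- `Kstar A B K`: the set of initial states `x₀` for which some control sequence
`u(k)`, `k ≥ 1`, makes the trajectory `x(0) = x₀`, `x(k) = max(A x(k−1), B u(k))`
stay in `K` forever. -/
def KstarMax {n p : ℕ} (A : Matrix (Fin n) (Fin n) (WithBot ℤ))
    (B : Matrix (Fin n) (Fin p) (WithBot ℤ)) (K : Set (Fin n → WithBot ℤ)) :
    Set (Fin n → WithBot ℤ) :=
  {x₀ | ∃ (u : ℕ → Fin p → WithBot ℤ) (x : ℕ → Fin n → WithBot ℤ),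
    x 0 = x₀ ∧ (∀ k : ℕ, x (k + 1) = maxMulVec A (x k) ⊔ maxMulVec B (u (k + 1))) ∧
    ∀ k : ℕ, x k ∈ K}

/-- `φ(X) = X ∩ A⁻¹(X ⊖ Im B)`, where `A⁻¹(Y) = {u : Au ∈ Y}` and
`Z ⊖ Y = {u : ∃ y ∈ Y, max(u, y) ∈ Z}`. -/
def PhiMax {n p : ℕ} (A : Matrix (Fin n) (Fin n) (WithBot ℤ))
    (B : Matrix (Fin n) (Fin p) (WithBot ℤ)) (X : Set (Fin n → WithBot ℤ)) :
    Set (Fin n → WithBot ℤ) :=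
  X ∩ {u | maxMulVec A u ∈ {w | ∃ y ∈ ImM B, w ⊔ y ∈ X}}

/-- The sequence `X₁ = K`, `X_{r+1} = φ(X_r)`; here `XseqMax A B K r` is `X_{r+1}`,
so that `XseqMax A B K 0 = X₁ = K` and `X_k = XseqMax A B K (k−1)` for `k ≥ 1`. -/
def XseqMax {n p : ℕ} (A : Matrix (Fin n) (Fin n) (WithBot ℤ))
    (B : Matrix (Fin n) (Fin p) (WithBot ℤ)) (K : Set (Fin n → WithBot ℤ)) :
    ℕ → Set (Fin n → WithBot ℤ)
  | 0 => K
  | r + 1 => PhiMax A B (XseqMax A B K r)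

/-! A subsemimodule `X` of finite volume is the span of its finite set of normalized vectors
(those with maximal entry `0`), and two nested subsemimodules with the same normalized vectors
coincide. The sequence `X_r` is a decreasing chain of subsemimodules of `K`, so the normalized
vectors of `X_r` form a decreasing chain of subsets of a set with `vol K` elements; it becomes
stationary after at most `vol K` steps. A fixed point of `φ` inside `K` is geometrically
invariant, hence contained in `K*`, while `K*` is contained in every `X_r`. -/

section MaxPlus

variable {m k : ℕ}

lemma WithBot.add_finset_sup {α ι : Type*} [LinearOrder α] [Add α] [AddLeftMono α]
    (s : Finset ι) (c : WithBot α) (f : ι → WithBot α) :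
    c + s.sup f = s.sup fun i => c + f i :=
  Finset.apply_sup_eq_sup_comp_of_linearOrder (c + ·) add_right_mono (WithBot.add_bot c)

lemma maxMulVec_sup (A : Matrix (Fin m) (Fin k) (WithBot ℤ)) (x y : Fin k → WithBot ℤ) :
    maxMulVec A (x ⊔ y) = maxMulVec A x ⊔ maxMulVec A y := by
  funext i
  simp only [maxMulVec, Pi.sup_apply, ← Finset.sup_sup]
  exact Finset.sup_congr rfl fun j _ => add_max _ _ _

lemma maxMulVec_const_add (A : Matrix (Fin m) (Fin k) (WithBot ℤ)) (c : WithBot ℤ)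
    (x : Fin k → WithBot ℤ) :
    maxMulVec A (fun j => c + x j) = fun i => c + maxMulVec A x i := by
  funext i
  simp only [maxMulVec, WithBot.add_finset_sup]
  exact Finset.sup_congr rfl fun j _ => add_left_comm _ _ _

lemma maxMulVec_bot (A : Matrix (Fin m) (Fin k) (WithBot ℤ)) :
    maxMulVec A (fun _ => ⊥) = fun _ => ⊥ := by
  funext i
  simp [maxMulVec]

end MaxPlus

section Subsemimodule

variable {m k : ℕ}

def normalized (X : Set (Fin m → WithBot ℤ)) : Set (Fin m → WithBot ℤ) :=
  {x ∈ X | Finset.univ.sup x = 0}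

lemma vol_eq_encard_normalized (X : Set (Fin m → WithBot ℤ)) :
    vol X = (normalized X).encard :=
  rfl

lemma normalized_mono : Monotone (normalized (m := m)) :=
  fun _ _ hXY _ hx => ⟨hXY hx.1, hx.2⟩

def ominus (Z Y : Set (Fin m → WithBot ℤ)) : Set (Fin m → WithBot ℤ) :=
  {w | ∃ y ∈ Y, w ⊔ y ∈ Z}

namespace IsSubsemimodule

variable {X Y : Set (Fin m → WithBot ℤ)}

lemma inter (hX : IsSubsemimodule X) (hY : IsSubsemimodule Y) : IsSubsemimodule (X ∩ Y) :=
  ⟨⟨hX.1, hY.1⟩, fun x hx y hy => ⟨hX.2.1 x hx.1 y hy.1, hY.2.1 x hx.2 y hy.2⟩,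
    fun c x hx => ⟨hX.2.2 c x hx.1, hY.2.2 c x hx.2⟩⟩

lemma preimage_maxMulVec (hY : IsSubsemimodule Y)
    (A : Matrix (Fin m) (Fin k) (WithBot ℤ)) : IsSubsemimodule (maxMulVec A ⁻¹' Y) := by
  refine ⟨?_, fun x hx y hy => ?_, fun c x hx => ?_⟩
  · simpa [maxMulVec_bot] using hY.1
  · simpa [maxMulVec_sup] using hY.2.1 _ hx _ hy
  · simpa [maxMulVec_const_add] using hY.2.2 c _ hx

lemma ominus (hX : IsSubsemimodule X) (hY : IsSubsemimodule Y) :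
    IsSubsemimodule (ominus X Y) := by
  refine ⟨⟨_, hY.1, by simpa using hX.1⟩, ?_, ?_⟩
  · rintro w ⟨y, hy, hwy⟩ w' ⟨y', hy', hwy'⟩
    exact ⟨y ⊔ y', hY.2.1 y hy y' hy', sup_sup_sup_comm w w' y y' ▸ hX.2.1 _ hwy _ hwy'⟩
  · rintro c w ⟨y, hy, hwy⟩
    refine ⟨_, hY.2.2 c y hy, ?_⟩
    convert hX.2.2 c _ hwy using 1
    funext i
    exact (add_max c (w i) (y i)).symm

lemma eq_bot_or_exists_normalized (hX : IsSubsemimodule X) {x : Fin m → WithBot ℤ}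
    (hx : x ∈ X) :
    x = (fun _ => ⊥) ∨ ∃ c : WithBot ℤ, ∃ y ∈ normalized X, x = fun j => c + y j := by
  by_cases hbot : Finset.univ.sup x = ⊥
  · left
    funext j
    exact le_bot_iff.mp (hbot ▸ Finset.le_sup (f := x) (Finset.mem_univ j))
  · right
    obtain ⟨a, ha⟩ := WithBot.ne_bot_iff_exists.mp hbot
    refine ⟨a, fun j => ((-a : ℤ) : WithBot ℤ) + x j, ⟨hX.2.2 _ x hx, ?_⟩, ?_⟩
    · rw [← WithBot.add_finset_sup, ← ha, ← WithBot.coe_add, neg_add_cancel,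
        WithBot.coe_zero]
    · funext j
      rw [← add_assoc, ← WithBot.coe_add, add_neg_cancel, WithBot.coe_zero, zero_add]

lemma eq_of_subset_of_normalized_eq (hX : IsSubsemimodule X) (hY : IsSubsemimodule Y)
    (hXY : X ⊆ Y) (h : normalized X = normalized Y) : X = Y := by
  refine hXY.antisymm fun y hy => ?_
  rcases hY.eq_bot_or_exists_normalized hy with rfl | ⟨c, z, hz, rfl⟩
  · exact hX.1
  · exact hX.2.2 c z (h ▸ hz).1

lemma maxSpan_subset {G : Set (Fin m → WithBot ℤ)} (hX : IsSubsemimodule X) (hG : G ⊆ X) :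
    maxSpan G ⊆ X := by
  rintro _ ⟨k, u, lam, hu, rfl⟩
  have hcomb : (fun j => Finset.univ.sup fun i => lam i + u i j) =
      Finset.univ.sup fun i j => lam i + u i j := by
    funext j
    rw [Finset.sup_apply]
  rw [hcomb]
  exact Finset.sup_induction hX.1 hX.2.1 fun i _ => hX.2.2 (lam i) (u i) (hG (hu i))

lemma eq_maxSpan_normalized (hX : IsSubsemimodule X) : X = maxSpan (normalized X) := by
  refine subset_antisymm (fun x hx => ?_) (hX.maxSpan_subset fun _ hx => hx.1)
  rcases hX.eq_bot_or_exists_normalized hx with rfl | ⟨c, y, hy, rfl⟩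
  · exact ⟨0, Fin.elim0, Fin.elim0, fun i => i.elim0, by simp⟩
  · exact ⟨1, fun _ => y, fun _ => c, fun _ => hy, by simp⟩

end IsSubsemimodule

lemma isSubsemimodule_ImM (B : Matrix (Fin m) (Fin k) (WithBot ℤ)) :
    IsSubsemimodule (ImM B) := by
  refine ⟨⟨_, (maxMulVec_bot B).symm⟩, ?_, ?_⟩
  · rintro _ ⟨x, rfl⟩ _ ⟨y, rfl⟩
    exact ⟨x ⊔ y, (maxMulVec_sup B x y).symm⟩
  · rintro c _ ⟨x, rfl⟩
    exact ⟨_, (maxMulVec_const_add B c x).symm⟩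

end Subsemimodule

lemma Set.exists_le_ncard_succ_eq_of_antitone {α : Type*} {S : ℕ → Set α} (hS : Antitone S)
    (hfin : (S 0).Finite) : ∃ r ≤ (S 0).ncard, S (r + 1) = S r := by
  by_contra! hne
  have hdecr : ∀ r ≤ (S 0).ncard + 1, (S r).ncard + r ≤ (S 0).ncard := by
    intro r
    induction r with
    | zero => simp
    | succ r ih =>
      intro hr
      have hlt : (S (r + 1)).ncard < (S r).ncard :=
        Set.ncard_lt_ncard ((hS r.le_succ).ssubset_of_ne (hne r (by omega)))
          (hfin.subset (hS r.zero_le))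
      have := ih (by omega)
      omega
  have := hdecr _ le_rfl
  omega

section Control

variable {n p : ℕ} (A : Matrix (Fin n) (Fin n) (WithBot ℤ))
  (B : Matrix (Fin n) (Fin p) (WithBot ℤ)) {K : Set (Fin n → WithBot ℤ)}

lemma PhiMax_eq (X : Set (Fin n → WithBot ℤ)) :
    PhiMax A B X = X ∩ maxMulVec A ⁻¹' ominus X (ImM B) :=
  rfl

lemma PhiMax_subset (X : Set (Fin n → WithBot ℤ)) : PhiMax A B X ⊆ X :=
  Set.inter_subset_left

lemma PhiMax_mono : Monotone (PhiMax A B) := by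
  rintro X Y hXY x ⟨hx, y, hy, hxy⟩
  exact ⟨hXY hx, y, hy, hXY hxy⟩

lemma IsSubsemimodule.PhiMax {X : Set (Fin n → WithBot ℤ)} (hX : IsSubsemimodule X) :
    IsSubsemimodule (PhiMax A B X) := by
  rw [PhiMax_eq]
  exact hX.inter ((hX.ominus (isSubsemimodule_ImM B)).preimage_maxMulVec A)

lemma IsSubsemimodule.XseqMax (hK : IsSubsemimodule K) (r : ℕ) :
    IsSubsemimodule (XseqMax A B K r) := by
  induction r with
  | zero => exact hK
  | succ r ih => exact ih.PhiMax A B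

lemma antitone_XseqMax (K : Set (Fin n → WithBot ℤ)) : Antitone (XseqMax A B K) :=
  antitone_nat_of_succ_le fun r => PhiMax_subset A B (XseqMax A B K r)

lemma XseqMax_subset (K : Set (Fin n → WithBot ℤ)) (r : ℕ) : XseqMax A B K r ⊆ K :=
  antitone_XseqMax A B K r.zero_le

lemma KstarMax_subset_PhiMax (K : Set (Fin n → WithBot ℤ)) :
    KstarMax A B K ⊆ PhiMax A B (KstarMax A B K) := by
  rintro _ ⟨u, x, rfl, hx, hxK⟩
  refine ⟨⟨u, x, rfl, hx, hxK⟩, _, ⟨u 1, rfl⟩, ?_⟩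
  rw [← hx 0]
  exact ⟨fun k => u (k + 1), fun k => x (k + 1), rfl, fun k => hx (k + 1), fun k => hxK (k + 1)⟩

lemma KstarMax_subset_XseqMax (K : Set (Fin n → WithBot ℤ)) (r : ℕ) :
    KstarMax A B K ⊆ XseqMax A B K r := by
  induction r with
  | zero => exact fun _ ⟨_, _, h0, _, hK⟩ => h0 ▸ hK 0
  | succ r ih => exact (KstarMax_subset_PhiMax A B K).trans (PhiMax_mono A B ih)

/-- `X ⊆ φ(X)` says that `X` is geometrically `(A,B)`-invariant. -/
lemma subset_KstarMax_of_subset_PhiMax {X : Set (Fin n → WithBot ℤ)} (hXK : X ⊆ K)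
    (hX : X ⊆ PhiMax A B X) : X ⊆ KstarMax A B K := by
  have hstep : ∀ v ∈ X, ∃ w, maxMulVec A v ⊔ maxMulVec B w ∈ X := by
    intro v hv
    obtain ⟨-, _, ⟨w, rfl⟩, hw⟩ := hX hv
    exact ⟨w, hw⟩
  choose! ctrl hctrl using hstep
  intro x₀ hx₀
  let x : ℕ → Fin n → WithBot ℤ := fun k =>
    Nat.rec x₀ (fun _ v => maxMulVec A v ⊔ maxMulVec B (ctrl v)) k
  have hxX : ∀ k, x k ∈ X := fun k => by
    induction k with
    | zero => exact hx₀
    | succ k ih => exact hctrl _ ih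
  exact ⟨fun k => ctrl (x (k - 1)), x, rfl, fun _ => rfl, fun k => hXK (hxX k)⟩

end Control

/-- If `K ⊆ ℤ_max^n` is a subsemimodule with finite volume, then for all matrices
`A`, `B`, the maximal geometrically `(A,B)`-invariant semimodule `K*` contained in
`K` is finitely generated; moreover there exists `k ≤ vol(K)+1` with
`X_{k+1} = X_k` and `K* = X_k`, where `X₁ = K` and `X_{r+1} = φ(X_r)`. -/
theorem kstar_finite_volume {n p : ℕ} (K : Set (Fin n → WithBot ℤ))
    (hK : IsSubsemimodule K) (hfin : vol K ≠ ⊤)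
    (A : Matrix (Fin n) (Fin n) (WithBot ℤ)) (B : Matrix (Fin n) (Fin p) (WithBot ℤ)) :
    (∃ G : Set (Fin n → WithBot ℤ), G.Finite ∧ KstarMax A B K = maxSpan G) ∧
    ∃ k : ℕ, 1 ≤ k ∧ (k : ℕ∞) ≤ vol K + 1 ∧
      XseqMax A B K k = XseqMax A B K (k - 1) ∧
      KstarMax A B K = XseqMax A B K (k - 1) := by
  have hfinK : (normalized K).Finite := Set.encard_ne_top_iff.mp hfin
  obtain ⟨r, hr, hstable⟩ := Set.exists_le_ncard_succ_eq_of_antitone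
    (normalized_mono.comp_antitone (antitone_XseqMax A B K)) hfinK
  have hfix : XseqMax A B K (r + 1) = XseqMax A B K r :=
    (hK.XseqMax A B (r + 1)).eq_of_subset_of_normalized_eq (hK.XseqMax A B r)
      (antitone_XseqMax A B K r.le_succ) hstable
  have hKstar : KstarMax A B K = XseqMax A B K r :=
    (KstarMax_subset_XseqMax A B K r).antisymm
      (subset_KstarMax_of_subset_PhiMax A B (XseqMax_subset A B K r) hfix.ge)
  refine ⟨⟨normalized (XseqMax A B K r),
    hfinK.subset (normalized_mono (XseqMax_subset A B K r)),
    hKstar ▸ (hK.XseqMax A B r).eq_maxSpan_normalized⟩, r + 1, by omega, ?_, hfix, hKstar⟩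
  rw [vol_eq_encard_normalized, ← hfinK.cast_ncard_eq]
  exact_mod_cast Nat.succ_le_succ hr
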